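/- Let Ω, ∂Ω, σ, n be as in the context. Let u, v : ℝ^d → ℝ be C² on a neighborhood of the closure of Ω, satisfying −Δu = E_u·u and −Δv = E_v·v on Ω with E_u ≠ E_v, and both satisfying Dirichlet boundary conditions: u = v = 0 on ∂Ω with normal gradients there, i.e. ∇u(x) = ⟨n(x),∇u(x)⟩·n(x) and ∇v(x) = ⟨n(x),∇v(x)⟩·n(x) for all x ∈ ∂Ω. Then ∫_Ω ‖x‖²·u(x)·v(x) dx = (4/(E_u−E_v)²)·∫_{∂Ω} ⟨x,n(x)⟩·⟨n(x),∇u(x)⟩·⟨n(x),∇v(x)⟩ dσ(x). -/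

import Mathlib

open MeasureTheory
open scoped RealInnerProductSpace Classical

noncomputable section

/-- The Euclidean Laplacian: the sum of the second partial derivatives. -/
def lap {d : ℕ} (u : EuclideanSpace ℝ (Fin d) → ℝ) (x : EuclideanSpace ℝ (Fin d)) : ℝ :=
  ∑ i, fderiv ℝ (fun y => fderiv ℝ u y (EuclideanSpace.single i (1:ℝ))) x
    (EuclideanSpace.single i (1:ℝ))

/-- The divergence: the sum of the partial derivatives of the components. -/
def divg {d : ℕ} (F : EuclideanSpace ℝ (Fin d) → EuclideanSpace ℝ (Fin d))
    (x : EuclideanSpace ℝ (Fin d)) : ℝ :=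
  ∑ i, fderiv ℝ (fun y => ⟪F y, EuclideanSpace.single i (1:ℝ)⟫) x
    (EuclideanSpace.single i (1:ℝ))


/-! Every identity used comes from the Gauss–Green formula for an explicit vector field. Green's
identity for `v ∇u` and `u ∇v` gives `E_u ∫ u v = E_v ∫ u v`, hence `∫ u v = 0` and then
`∫ ⟪∇u, ∇v⟫ = 0`. Write `A = ∫ v ⟪x, ∇u⟫` and `B = ∫ u ⟪x, ∇v⟫`. The same identity for `‖x‖² v ∇u`
and `‖x‖² u ∇v` gives `(E_u - E_v) ∫ ‖x‖² u v = 2 (A - B)`; the dilation field `u v x` gives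
`A + B = -d ∫ u v = 0`; and the Rellich field `⟪x, ∇u⟫ ∇v + ⟪x, ∇v⟫ ∇u - ⟪∇u, ∇v⟫ x`, whose flux
only sees normal derivatives, gives `-E_v A - E_u B = ∫_{∂Ω} ⟪x, n⟫ ∂ₙu ∂ₙv`. Eliminating `A` and
`B` yields the identity. -/

section

variable {d : ℕ}

open scoped Gradient

local notation "E" => EuclideanSpace ℝ (Fin d)

theorem sum_inner_single_mul_apply (L : E →L[ℝ] ℝ) (w : E) :
    ∑ i, ⟪w, EuclideanSpace.single i (1 : ℝ)⟫ * L (EuclideanSpace.single i 1) = L w := by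
  conv_rhs => rw [← (EuclideanSpace.basisFun (Fin d) ℝ).sum_repr' w]
  simp [EuclideanSpace.basisFun_apply, real_inner_comm]

theorem divg_add {F G : E → E} {x : E} (hF : DifferentiableAt ℝ F x)
    (hG : DifferentiableAt ℝ G x) : divg (fun y => F y + G y) x = divg F x + divg G x := by
  simp only [divg, inner_add_left, ← Finset.sum_add_distrib]
  refine Finset.sum_congr rfl fun i _ => ?_
  rw [fderiv_fun_add (hF.inner ℝ (differentiableAt_const _))
    (hG.inner ℝ (differentiableAt_const _))]
  rfl

theorem divg_sub {F G : E → E} {x : E} (hF : DifferentiableAt ℝ F x)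
    (hG : DifferentiableAt ℝ G x) : divg (fun y => F y - G y) x = divg F x - divg G x := by
  simp only [divg, inner_sub_left, ← Finset.sum_sub_distrib]
  refine Finset.sum_congr rfl fun i _ => ?_
  rw [fderiv_fun_sub (hF.inner ℝ (differentiableAt_const _))
    (hG.inner ℝ (differentiableAt_const _))]
  rfl

theorem divg_smul {f : E → ℝ} {G : E → E} {x : E} (hf : DifferentiableAt ℝ f x)
    (hG : DifferentiableAt ℝ G x) :
    divg (fun y => f y • G y) x = fderiv ℝ f x (G x) + f x * divg G x := by
  simp only [divg, real_inner_smul_left,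
    fderiv_fun_mul hf (hG.inner ℝ (differentiableAt_const _)), add_apply,
    smul_apply, smul_eq_mul, Finset.sum_add_distrib, ← Finset.mul_sum]
  rw [← sum_inner_single_mul_apply (fderiv ℝ f x) (G x)]
  ring

theorem divg_gradient (u : E → ℝ) : divg (∇ u) = lap u := by
  ext x
  simp only [divg, lap, inner_gradient_left]

theorem divg_id (x : E) : divg (fun y => y) x = d := by
  have h (i : Fin d) : fderiv ℝ (fun y : E => ⟪y, EuclideanSpace.single i (1 : ℝ)⟫) x
      (EuclideanSpace.single i 1) = 1 := by
    have hlin : (fun y : E => ⟪y, EuclideanSpace.single i (1 : ℝ)⟫)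
        = innerSL ℝ (EuclideanSpace.single i (1 : ℝ)) := funext fun y => real_inner_comm _ _
    rw [hlin, ContinuousLinearMap.fderiv]
    simp
  simp only [divg, h, Finset.sum_const, Finset.card_univ, Fintype.card_fin, nsmul_eq_mul,
    mul_one]

theorem ContDiffAt.gradient {u : E → ℝ} {x : E} {m n : WithTop ℕ∞} (hu : ContDiffAt ℝ n u x)
    (hmn : m + 1 ≤ n) : ContDiffAt ℝ m (∇ u) x :=
  (InnerProductSpace.toDual ℝ E).symm.toContinuousLinearEquiv.contDiff.contDiffAt.comp x
    (hu.fderiv_right hmn)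

theorem ContDiffOn.gradient_of_isOpen {u : E → ℝ} {U : Set E} {m n : WithTop ℕ∞}
    (hu : ContDiffOn ℝ n u U) (hU : IsOpen U) (hmn : m + 1 ≤ n) : ContDiffOn ℝ m (∇ u) U :=
  (InnerProductSpace.toDual ℝ E).symm.toContinuousLinearEquiv.contDiff.comp_contDiffOn
    (hu.fderiv_of_isOpen hU hmn)

theorem ContDiffAt.inner_fderiv_gradient_comm {u : E → ℝ} {x : E} (hu : ContDiffAt ℝ 2 u x)
    (a b : E) : ⟪fderiv ℝ (∇ u) x a, b⟫ = ⟪a, fderiv ℝ (∇ u) x b⟫ := by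
  have hgrad : ∇ u = (InnerProductSpace.toDual ℝ E).symm ∘ fderiv ℝ u := rfl
  rw [hgrad, LinearIsometryEquiv.comp_fderiv, real_inner_comm _ a]
  simp only [ContinuousLinearMap.comp_apply, ContinuousLinearEquiv.coe_coe,
    LinearIsometryEquiv.coe_toContinuousLinearEquiv]
  rw [InnerProductSpace.toDual_symm_apply, InnerProductSpace.toDual_symm_apply]
  exact hu.isSymmSndFDerivAt (by simp) a b

theorem ContDiffAt.differentiableAt_gradient {u : E → ℝ} {x : E} (hu : ContDiffAt ℝ 2 u x) :
    DifferentiableAt ℝ (∇ u) x :=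
  (hu.gradient (m := 1) (by norm_num)).differentiableAt one_ne_zero

theorem inner_gradient_norm_sq_mul {v : E → ℝ} {x : E} (hv : DifferentiableAt ℝ v x) (w : E) :
    ⟪∇ (fun y => ‖y‖ ^ 2 * v y) x, w⟫ = 2 * (v x * ⟪x, w⟫) + ‖x‖ ^ 2 * ⟪∇ v x, w⟫ := by
  rw [inner_gradient_left, fderiv_fun_mul (differentiableAt_fun_id.norm_sq ℝ) hv,
    fderiv_norm_sq_apply, inner_gradient_left]
  simp only [add_apply, smul_apply, smul_eq_mul, innerSL_apply_apply]
  ring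

def rellichField (u v : E → ℝ) : E → E := fun y =>
  ⟪y, ∇ u y⟫ • ∇ v y + ⟪y, ∇ v y⟫ • ∇ u y - ⟪∇ u y, ∇ v y⟫ • y

theorem ContDiffAt.divg_rellichField {u v : E → ℝ} {x : E} (hu : ContDiffAt ℝ 2 u x)
    (hv : ContDiffAt ℝ 2 v x) :
    divg (rellichField u v) x
      = (2 - d) * ⟪∇ u x, ∇ v x⟫ + ⟪x, ∇ u x⟫ * lap v x + ⟪x, ∇ v x⟫ * lap u x := by
  have hgu := hu.differentiableAt_gradient
  have hgv := hv.differentiableAt_gradient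
  have hxu : DifferentiableAt ℝ (fun y => ⟪y, ∇ u y⟫) x := differentiableAt_fun_id.inner ℝ hgu
  have hxv : DifferentiableAt ℝ (fun y => ⟪y, ∇ v y⟫) x := differentiableAt_fun_id.inner ℝ hgv
  have huv : DifferentiableAt ℝ (fun y => ⟪∇ u y, ∇ v y⟫) x := hgu.inner ℝ hgv
  unfold rellichField
  rw [divg_sub ((hxu.fun_smul hgv).fun_add (hxv.fun_smul hgu))
      (huv.fun_smul differentiableAt_fun_id),
    divg_add (hxu.fun_smul hgv) (hxv.fun_smul hgu), divg_smul hxu hgv, divg_smul hxv hgu,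
    divg_smul huv differentiableAt_fun_id, divg_gradient, divg_gradient, divg_id,
    fderiv_inner_apply (𝕜 := ℝ) differentiableAt_fun_id hgu,
    fderiv_inner_apply (𝕜 := ℝ) differentiableAt_fun_id hgv,
    fderiv_inner_apply (𝕜 := ℝ) hgu hgv]
  simp only [fderiv_fun_id, ContinuousLinearMap.id_apply]
  rw [real_inner_comm (∇ u x) (∇ v x),
    real_inner_comm (fderiv ℝ (∇ v) x x), hu.inner_fderiv_gradient_comm,
    hv.inner_fderiv_gradient_comm]
  ring

theorem inner_rellichField_of_normal {u v : E → ℝ} {x m : E} (hu : ∇ u x = ⟪m, ∇ u x⟫ • m)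
    (hv : ∇ v x = ⟪m, ∇ v x⟫ • m) :
    ⟪rellichField u v x, m⟫ = ⟪x, m⟫ * ⟪m, ∇ u x⟫ * ⟪m, ∇ v x⟫ := by
  -- `m` need not be a unit vector: `hu` only forces `⟪m, ∇ u x⟫ * (1 - ⟪m, m⟫) = 0`
  have hunit : ⟪m, ∇ u x⟫ = ⟪m, ∇ u x⟫ * ⟪m, m⟫ := by
    conv_lhs => rw [hu, real_inner_smul_right]
  simp only [rellichField, inner_sub_left, inner_add_left, real_inner_smul_left]
  rw [hu, hv]
  simp only [real_inner_smul_left, real_inner_smul_right]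
  linear_combination (⟪m, ∇ v x⟫ * ⟪m, m⟫ * ⟪x, m⟫) * hunit

structure GaussGreenNhd (Ω U : Set E) (n : E → E) (μ : Measure E) : Prop where
  isOpen : IsOpen U
  closure_subset : closure Ω ⊆ U
  integral_divg : ∀ F : E → E, ContDiffOn ℝ 1 F U →
    ∫ x in Ω, divg F x = ∫ x in frontier Ω, ⟪F x, n x⟫ ∂μ

variable {Ω U : Set (EuclideanSpace ℝ (Fin d))}
  {n : EuclideanSpace ℝ (Fin d) → EuclideanSpace ℝ (Fin d)} {μ : Measure (EuclideanSpace ℝ (Fin d))}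

theorem GaussGreenNhd.setIntegral_eq (hG : GaussGreenNhd Ω U n μ) (hΩ : MeasurableSet Ω)
    {F : E → E} (hF : ContDiffOn ℝ 1 F U) {g b : E → ℝ} (hg : ∀ x ∈ Ω, divg F x = g x)
    (hb : ∀ x ∈ frontier Ω, ⟪F x, n x⟫ = b x) :
    ∫ x in Ω, g x = ∫ x in frontier Ω, b x ∂μ := by
  rw [← setIntegral_congr_fun hΩ hg, ← setIntegral_congr_fun isClosed_frontier.measurableSet hb]
  exact hG.integral_divg F hF

theorem GaussGreenNhd.contDiffAt (hG : GaussGreenNhd Ω U n μ) {f : E → ℝ} {k : WithTop ℕ∞}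
    (hf : ContDiffOn ℝ k f U) {x : E} (hx : x ∈ Ω) : ContDiffAt ℝ k f x :=
  hf.contDiffAt (hG.isOpen.mem_nhds (hG.closure_subset (subset_closure hx)))

theorem GaussGreenNhd.integrableOn (hG : GaussGreenNhd Ω U n μ) (hΩb : Bornology.IsBounded Ω)
    (g : E → ℝ) (hg : ContinuousOn g U) : IntegrableOn g Ω :=
  ((hg.mono hG.closure_subset).integrableOn_compact hΩb.isCompact_closure).mono_set subset_closure

theorem GaussGreenNhd.integral_inner_gradient (hG : GaussGreenNhd Ω U n μ) (hΩ : MeasurableSet Ω)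
    (hΩb : Bornology.IsBounded Ω) {f u : E → ℝ} {Eu : ℝ} (hf : ContDiffOn ℝ 1 f U)
    (hu : ContDiffOn ℝ 2 u U) (hEu : ∀ x ∈ Ω, -lap u x = Eu * u x)
    (hf0 : ∀ x ∈ frontier Ω, f x = 0) :
    ∫ x in Ω, ⟪∇ f x, ∇ u x⟫ = Eu * ∫ x in Ω, f x * u x := by
  have hgu : ContDiffOn ℝ 1 (∇ u) U := hu.gradient_of_isOpen hG.isOpen (by norm_num)
  have hgf : ContDiffOn ℝ 0 (∇ f) U := hf.gradient_of_isOpen hG.isOpen (by norm_num)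
  have hgreen := hG.setIntegral_eq hΩ (hf.fun_smul hgu)
    (g := fun x => ⟪∇ f x, ∇ u x⟫ - Eu * (f x * u x)) (b := 0)
    (fun x hx => by
      have hfx := (hG.contDiffAt hf hx).differentiableAt one_ne_zero
      rw [divg_smul hfx (hG.contDiffAt hu hx).differentiableAt_gradient, divg_gradient,
        ← inner_gradient_left, ← neg_neg (lap u x), hEu x hx]
      ring)
    (fun x hx => by simp [hf0 x hx])
  rw [integral_sub
    (hG.integrableOn hΩb (fun x => ⟪∇ f x, ∇ u x⟫) (hgf.continuousOn.inner hgu.continuousOn))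
    ((hG.integrableOn hΩb (fun x => f x * u x) (hf.continuousOn.mul hu.continuousOn)).const_mul Eu),
    integral_const_mul] at hgreen
  simpa [sub_eq_zero] using hgreen

theorem GaussGreenNhd.integral_mul_eq_zero_of_ne (hG : GaussGreenNhd Ω U n μ)
    (hΩ : MeasurableSet Ω) (hΩb : Bornology.IsBounded Ω) {u v : E → ℝ} {Eu Ev : ℝ}
    (hu : ContDiffOn ℝ 2 u U) (hv : ContDiffOn ℝ 2 v U) (hEu : ∀ x ∈ Ω, -lap u x = Eu * u x)
    (hEv : ∀ x ∈ Ω, -lap v x = Ev * v x) (hu0 : ∀ x ∈ frontier Ω, u x = 0)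
    (hv0 : ∀ x ∈ frontier Ω, v x = 0) (hne : Eu ≠ Ev) :
    ∫ x in Ω, u x * v x = 0 := by
  have hvu := hG.integral_inner_gradient hΩ hΩb (hv.of_le one_le_two) hu hEu hv0
  have huv := hG.integral_inner_gradient hΩ hΩb (hu.of_le one_le_two) hv hEv hu0
  simp only [real_inner_comm (∇ u _) (∇ v _), mul_comm (v _)] at hvu
  have hsub : (Eu - Ev) * ∫ x in Ω, u x * v x = 0 := by linarith
  exact (mul_eq_zero.1 hsub).resolve_left (sub_ne_zero.2 hne)

theorem GaussGreenNhd.integral_mul_inner_gradient_add (hG : GaussGreenNhd Ω U n μ)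
    (hΩ : MeasurableSet Ω) (hΩb : Bornology.IsBounded Ω) {u v : E → ℝ}
    (hu : ContDiffOn ℝ 1 u U) (hv : ContDiffOn ℝ 1 v U) (hu0 : ∀ x ∈ frontier Ω, u x = 0) :
    (∫ x in Ω, v x * ⟪x, ∇ u x⟫) + ∫ x in Ω, u x * ⟪x, ∇ v x⟫ = -d * ∫ x in Ω, u x * v x := by
  have hcu := hu.continuousOn
  have hcv := hv.continuousOn
  have hgu := (hu.gradient_of_isOpen hG.isOpen (m := 0) (by norm_num)).continuousOn
  have hgv := (hv.gradient_of_isOpen hG.isOpen (m := 0) (by norm_num)).continuousOn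
  have hdil := hG.setIntegral_eq hΩ (F := fun y => (u y * v y) • y) (by fun_prop)
    (g := fun x => v x * ⟪x, ∇ u x⟫ + u x * ⟪x, ∇ v x⟫ + d * (u x * v x)) (b := 0)
    (fun x hx => by
      have hux := (hG.contDiffAt hu hx).differentiableAt one_ne_zero
      have hvx := (hG.contDiffAt hv hx).differentiableAt one_ne_zero
      rw [divg_smul (hux.fun_mul hvx) differentiableAt_fun_id, divg_id, fderiv_fun_mul hux hvx,
        real_inner_comm _ x, real_inner_comm _ x, inner_gradient_left, inner_gradient_left]
      simp only [add_apply, smul_apply, smul_eq_mul]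
      ring)
    (fun x hx => by simp [hu0 x hx])
  rw [integral_add (hG.integrableOn hΩb _ (by fun_prop))
      (hG.integrableOn hΩb (fun x => d * (u x * v x)) (by fun_prop)),
    integral_add (hG.integrableOn hΩb (fun x => v x * ⟪x, ∇ u x⟫) (by fun_prop))
      (hG.integrableOn hΩb (fun x => u x * ⟪x, ∇ v x⟫) (by fun_prop)), integral_const_mul] at hdil
  simp only [Pi.zero_apply, integral_zero] at hdil
  linarith

theorem GaussGreenNhd.integral_inner_gradient_norm_sq_mul (hG : GaussGreenNhd Ω U n μ)
    (hΩ : MeasurableSet Ω) (hΩb : Bornology.IsBounded Ω) {u v : E → ℝ} {Eu : ℝ}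
    (hu : ContDiffOn ℝ 2 u U) (hv : ContDiffOn ℝ 1 v U) (hEu : ∀ x ∈ Ω, -lap u x = Eu * u x)
    (hv0 : ∀ x ∈ frontier Ω, v x = 0) :
    2 * (∫ x in Ω, v x * ⟪x, ∇ u x⟫) + ∫ x in Ω, ‖x‖ ^ 2 * ⟪∇ v x, ∇ u x⟫
      = Eu * ∫ x in Ω, ‖x‖ ^ 2 * v x * u x := by
  have hcv := hv.continuousOn
  have hgu := (hu.gradient_of_isOpen hG.isOpen (m := 0) (by norm_num)).continuousOn
  have hgv := (hv.gradient_of_isOpen hG.isOpen (m := 0) (by norm_num)).continuousOn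
  have hgreen := hG.integral_inner_gradient hΩ hΩb (f := fun y => ‖y‖ ^ 2 * v y)
    ((contDiffOn_id.norm_sq ℝ).mul hv) hu hEu (fun x hx => by simp [hv0 x hx])
  rw [setIntegral_congr_fun hΩ fun x hx => inner_gradient_norm_sq_mul
      ((hG.contDiffAt hv hx).differentiableAt one_ne_zero) (∇ u x),
    integral_add (hG.integrableOn hΩb (fun x => 2 * (v x * ⟪x, ∇ u x⟫)) (by fun_prop))
      (hG.integrableOn hΩb (fun x => ‖x‖ ^ 2 * ⟪∇ v x, ∇ u x⟫) (by fun_prop)),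
    integral_const_mul] at hgreen
  exact hgreen

theorem GaussGreenNhd.sub_mul_integral_norm_sq_mul (hG : GaussGreenNhd Ω U n μ)
    (hΩ : MeasurableSet Ω) (hΩb : Bornology.IsBounded Ω) {u v : E → ℝ} {Eu Ev : ℝ}
    (hu : ContDiffOn ℝ 2 u U) (hv : ContDiffOn ℝ 2 v U) (hEu : ∀ x ∈ Ω, -lap u x = Eu * u x)
    (hEv : ∀ x ∈ Ω, -lap v x = Ev * v x) (hu0 : ∀ x ∈ frontier Ω, u x = 0)
    (hv0 : ∀ x ∈ frontier Ω, v x = 0) :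
    (Eu - Ev) * ∫ x in Ω, ‖x‖ ^ 2 * u x * v x
      = 2 * ((∫ x in Ω, v x * ⟪x, ∇ u x⟫) - ∫ x in Ω, u x * ⟪x, ∇ v x⟫) := by
  have hvu := hG.integral_inner_gradient_norm_sq_mul hΩ hΩb hu (hv.of_le one_le_two) hEu hv0
  have huv := hG.integral_inner_gradient_norm_sq_mul hΩ hΩb hv (hu.of_le one_le_two) hEv hu0
  simp only [real_inner_comm (∇ u _) (∇ v _), mul_right_comm _ (v _)] at hvu
  linarith

theorem GaussGreenNhd.rellich_identity (hG : GaussGreenNhd Ω U n μ)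
    (hΩ : MeasurableSet Ω) (hΩb : Bornology.IsBounded Ω) {u v : E → ℝ} {Eu Ev : ℝ}
    (hu : ContDiffOn ℝ 2 u U) (hv : ContDiffOn ℝ 2 v U) (hEu : ∀ x ∈ Ω, -lap u x = Eu * u x)
    (hEv : ∀ x ∈ Ω, -lap v x = Ev * v x)
    (hun : ∀ x ∈ frontier Ω, ∇ u x = ⟪n x, ∇ u x⟫ • n x)
    (hvn : ∀ x ∈ frontier Ω, ∇ v x = ⟪n x, ∇ v x⟫ • n x) :
    (2 - d) * (∫ x in Ω, ⟪∇ u x, ∇ v x⟫) - Ev * (∫ x in Ω, v x * ⟪x, ∇ u x⟫)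
        - Eu * (∫ x in Ω, u x * ⟪x, ∇ v x⟫)
      = ∫ x in frontier Ω, ⟪x, n x⟫ * ⟪n x, ∇ u x⟫ * ⟪n x, ∇ v x⟫ ∂μ := by
  have hcu := hu.continuousOn
  have hcv := hv.continuousOn
  have hgu := hu.gradient_of_isOpen hG.isOpen (m := 1) (by norm_num)
  have hgv := hv.gradient_of_isOpen hG.isOpen (m := 1) (by norm_num)
  have hcgu := hgu.continuousOn
  have hcgv := hgv.continuousOn
  have hF : ContDiffOn ℝ 1 (rellichField u v) U :=
    (((contDiffOn_id.inner ℝ hgu).fun_smul hgv).add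
      ((contDiffOn_id.inner ℝ hgv).fun_smul hgu)).sub ((hgu.inner ℝ hgv).fun_smul contDiffOn_id)
  have hrel := hG.setIntegral_eq hΩ hF
    (g := fun x => (2 - d) * ⟪∇ u x, ∇ v x⟫ - Ev * (v x * ⟪x, ∇ u x⟫) - Eu * (u x * ⟪x, ∇ v x⟫))
    (fun x hx => by
      rw [(hG.contDiffAt hu hx).divg_rellichField (hG.contDiffAt hv hx), ← neg_neg (lap u x),
        ← neg_neg (lap v x), hEu x hx, hEv x hx]
      ring)
    (fun x hx => inner_rellichField_of_normal (hun x hx) (hvn x hx))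
  rw [integral_sub (hG.integrableOn hΩb _ (by fun_prop))
      (hG.integrableOn hΩb (fun x => Eu * (u x * ⟪x, ∇ v x⟫)) (by fun_prop)),
    integral_sub (hG.integrableOn hΩb (fun x => (2 - d) * ⟪∇ u x, ∇ v x⟫) (by fun_prop))
      (hG.integrableOn hΩb (fun x => Ev * (v x * ⟪x, ∇ u x⟫)) (by fun_prop)),
    integral_const_mul, integral_const_mul, integral_const_mul] at hrel
  exact hrel

end

theorem dirichlet_r_squared_identity_general
    (d : ℕ) (Ω : Set (EuclideanSpace ℝ (Fin d)))
    (hΩo : IsOpen Ω) (hΩb : Bornology.IsBounded Ω)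
    (n : EuclideanSpace ℝ (Fin d) → EuclideanSpace ℝ (Fin d))
    (hGG : ∀ F : EuclideanSpace ℝ (Fin d) → EuclideanSpace ℝ (Fin d),
      (∃ U, IsOpen U ∧ closure Ω ⊆ U ∧ ContDiffOn ℝ 1 F U) →
      (∫ x in Ω, divg F x) = ∫ x in frontier Ω, ⟪F x, n x⟫ ∂(μH[(d:ℝ) - 1]))
    (u v : EuclideanSpace ℝ (Fin d) → ℝ) (Eu Ev : ℝ) (hne : Eu ≠ Ev)
    (hur : ∃ U, IsOpen U ∧ closure Ω ⊆ U ∧ ContDiffOn ℝ 2 u U) (hvr : ∃ U, IsOpen U ∧ closure Ω ⊆ U ∧ ContDiffOn ℝ 2 v U)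
    (hHu : ∀ x ∈ Ω, -lap u x = Eu * u x) (hHv : ∀ x ∈ Ω, -lap v x = Ev * v x)
    (hu0 : ∀ x ∈ frontier Ω, u x = 0)
    (hun : ∀ x ∈ frontier Ω, gradient u x = ⟪n x, gradient u x⟫ • n x)
    (hv0 : ∀ x ∈ frontier Ω, v x = 0)
    (hvn : ∀ x ∈ frontier Ω, gradient v x = ⟪n x, gradient v x⟫ • n x) :
    (∫ x in Ω, ‖x‖ ^ 2 * u x * v x)
      = 4 / (Eu - Ev) ^ 2 *
        ∫ x in frontier Ω,
          ⟪x, n x⟫ * ⟪n x, gradient u x⟫ * ⟪n x, gradient v x⟫ ∂(μH[(d:ℝ) - 1]) := by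
  obtain ⟨Uu, hUu, hΩUu, hu⟩ := hur
  obtain ⟨Uv, hUv, hΩUv, hv⟩ := hvr
  have hΩU : closure Ω ⊆ Uu ∩ Uv := Set.subset_inter hΩUu hΩUv
  have hG : GaussGreenNhd Ω (Uu ∩ Uv) n μH[(d:ℝ) - 1] :=
    ⟨hUu.inter hUv, hΩU, fun F hF => hGG F ⟨_, hUu.inter hUv, hΩU, hF⟩⟩
  replace hu := hu.mono (Set.inter_subset_left (t := Uv))
  replace hv := hv.mono (Set.inter_subset_right (s := Uu))
  have hΩ := hΩo.measurableSet
  have horth := hG.integral_mul_eq_zero_of_ne hΩ hΩb hu hv hHu hHv hu0 hv0 hne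
  have hgrad := hG.integral_inner_gradient hΩ hΩb (hu.of_le one_le_two) hv hHv hu0
  have hdil := hG.integral_mul_inner_gradient_add hΩ hΩb (hu.of_le one_le_two)
    (hv.of_le one_le_two) hu0
  have hweight := hG.sub_mul_integral_norm_sq_mul hΩ hΩb hu hv hHu hHv hu0 hv0
  have hrel := hG.rellich_identity hΩ hΩb hu hv hHu hHv hun hvn
  rw [horth, mul_zero] at hgrad hdil
  rw [hgrad, mul_zero, zero_sub] at hrel
  rw [← hrel, div_mul_eq_mul_div, eq_div_iff (pow_ne_zero 2 (sub_ne_zero.2 hne))]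
  linear_combination (Eu - Ev) * hweight + 2 * (Eu + Ev) * hdil

theorem dirichlet_r_squared_identity
    (d : ℕ) (hd : 2 ≤ d) (Ω : Set (EuclideanSpace ℝ (Fin d)))
    (hΩo : IsOpen Ω) (hΩb : Bornology.IsBounded Ω)
    (n : EuclideanSpace ℝ (Fin d) → EuclideanSpace ℝ (Fin d))
    (hGG : ∀ F : EuclideanSpace ℝ (Fin d) → EuclideanSpace ℝ (Fin d),
      (∃ U, IsOpen U ∧ closure Ω ⊆ U ∧ ContDiffOn ℝ 1 F U) →
      (∫ x in Ω, divg F x) = ∫ x in frontier Ω, ⟪F x, n x⟫ ∂(μH[(d:ℝ) - 1]))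
    (u v : EuclideanSpace ℝ (Fin d) → ℝ) (Eu Ev : ℝ) (hne : Eu ≠ Ev)
    (hur : ∃ U, IsOpen U ∧ closure Ω ⊆ U ∧ ContDiffOn ℝ 2 u U) (hvr : ∃ U, IsOpen U ∧ closure Ω ⊆ U ∧ ContDiffOn ℝ 2 v U)
    (hHu : ∀ x ∈ Ω, -lap u x = Eu * u x) (hHv : ∀ x ∈ Ω, -lap v x = Ev * v x)
    (hu0 : ∀ x ∈ frontier Ω, u x = 0)
    (hun : ∀ x ∈ frontier Ω, gradient u x = ⟪n x, gradient u x⟫ • n x)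
    (hv0 : ∀ x ∈ frontier Ω, v x = 0)
    (hvn : ∀ x ∈ frontier Ω, gradient v x = ⟪n x, gradient v x⟫ • n x) :
    (∫ x in Ω, ‖x‖ ^ 2 * u x * v x)
      = 4 / (Eu - Ev) ^ 2 *
        ∫ x in frontier Ω,
          ⟪x, n x⟫ * ⟪n x, gradient u x⟫ * ⟪n x, gradient v x⟫ ∂(μH[(d:ℝ) - 1]) :=
  dirichlet_r_squared_identity_general d Ω hΩo hΩb n hGG u v Eu Ev hne hur hvr hHu hHv hu0 hun hv0
    hvn
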